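/- Logarithmic iteration complexity of PAIR (Lemma A.2): In a deterministic goal-conditioned transition system, let D ≥ 1 be a natural number such that every pair (s, g) with g reachable from s satisfies d(s, g) ≤ D. Let (π_k)_{k∈ℕ} be a sequence of deterministic goal-conditioned policies such that π₀ reaches g from s whenever d(s, g) ≤ 1, and for every k ≥ 1 and every pair (s, g), if there exists a state s_B such that π_{k−1} reaches s_B from s (toward goal s_B) and π_{k−1} reaches g from s_B (toward goal g), then π_k reaches g from s. Then for k = ⌈log₂ D⌉, the policy π_k reaches g from s for every pair (s, g) such that g is reachable from s. -/
import Mathlib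



/-- The final state after executing an action list from a state in a
deterministic goal-conditioned transition system with transition function `t`. -/
def run {S A : Type*} (t : S → A → S) : S → List A → S
  | s, [] => s
  | s, a :: L => run t (t s a) L

/-- `gdist t s g` is the least number of steps needed to go from `s` to `g`
(`⊤` if `g` is unreachable from `s`). -/
noncomputable def gdist {S A : Type*} (t : S → A → S) (s g : S) : ℕ∞ :=
  sInf {n : ℕ∞ | ∃ L : List A, (L.length : ℕ∞) = n ∧ run t s L = g}

/-- The state reached after `n` steps of executing the deterministic
goal-conditioned policy `π` from state `s` toward goal `g`. -/
def polIter {S A : Type*} (t : S → A → S) (π : S → S → A) (g s : S) : ℕ → S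
  | 0 => s
  | n + 1 => t (polIter t π g s n) (π (polIter t π g s n) g)

/-- The policy `π` reaches goal `g` from state `s`: the rollout of `π` from `s`
toward `g` visits `g` at some step. -/
def polReaches {S A : Type*} (t : S → A → S) (π : S → S → A) (s g : S) : Prop :=
  ∃ n : ℕ, polIter t π g s n = g

lemma run_append {S A : Type*} (t : S → A → S) :
    ∀ (L1 L2 : List A) (s : S), run t s (L1 ++ L2) = run t (run t s L1) L2 := by
  intro L1
  induction L1 with
  | nil => intro L2 s; rfl
  | cons a L ih => intro L2 s; simp [run, ih]

/-- Logarithmic iteration complexity of PAIR: if every reachable pair has distance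
at most `D` (with `D ≥ 1`), `π 0` solves every pair with `d(s, g) ≤ 1`, and each
`π k` (`k ≥ 1`) satisfies the task-reduction update property with respect to
`π (k-1)`, then after `k = ⌈log₂ D⌉` iterations, `π k` solves every pair `(s, g)`
with `g` reachable from `s`. -/
theorem log_iteration_complexity {S A : Type*} (t : S → A → S) (D : ℕ) (hD : 1 ≤ D)
    (hdiam : ∀ s g : S, (∃ L : List A, run t s L = g) → gdist t s g ≤ (D : ℕ∞))
    (π : ℕ → S → S → A)
    (h0 : ∀ s g : S, gdist t s g ≤ (1 : ℕ∞) → polReaches t (π 0) s g)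
    (hstep : ∀ k : ℕ, 1 ≤ k → ∀ s g : S,
      (∃ sB : S, polReaches t (π (k - 1)) s sB ∧ polReaches t (π (k - 1)) sB g) →
        polReaches t (π k) s g) :
    ∀ s g : S, (∃ L : List A, run t s L = g) → polReaches t (π (Nat.clog 2 D)) s g := by
  -- main induction: π k solves every pair with a witness list of length ≤ 2^k
  have main : ∀ k : ℕ, ∀ s g : S,
      (∃ L : List A, L.length ≤ 2 ^ k ∧ run t s L = g) → polReaches t (π k) s g := by
    intro k
    induction k with
    | zero =>
      intro s g ⟨L, hlen, hrun⟩
      apply h0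
      calc gdist t s g ≤ (L.length : ℕ∞) := sInf_le ⟨L, rfl, hrun⟩
        _ ≤ 1 := by exact_mod_cast hlen
    | succ k ih =>
      intro s g ⟨L, hlen, hrun⟩
      apply hstep (k + 1) (by omega)
      refine ⟨run t s (L.take (2 ^ k)), ?_, ?_⟩ <;> simp only [Nat.add_sub_cancel]
      · exact ih s _ ⟨L.take (2 ^ k), by simp, rfl⟩
      · refine ih _ g ⟨L.drop (2 ^ k), ?_, ?_⟩
        · simp only [List.length_drop]
          have := hlen; rw [pow_succ] at this; omega
        · rw [← run_append, List.take_append_drop, hrun]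
  intro s g hreach
  -- extract a list of length ≤ D from gdist ≤ D
  have hd := hdiam s g hreach
  have hne : {n : ℕ∞ | ∃ L : List A, (L.length : ℕ∞) = n ∧ run t s L = g}.Nonempty := by
    obtain ⟨L, hL⟩ := hreach
    exact ⟨L.length, L, rfl, hL⟩
  have hmem := csInf_mem hne
  obtain ⟨L, hLlen, hLrun⟩ := hmem
  refine main _ s g ⟨L, ?_, hLrun⟩
  have hle : (L.length : ℕ∞) ≤ (D : ℕ∞) := by rw [hLlen]; exact hd
  have hLD : L.length ≤ D := by exact_mod_cast hle
  exact hLD.trans (Nat.le_pow_clog (by norm_num) D)
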